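/- arXiv:1907.07716 — 2 statements merged into one kernel-verified Lean document; each statement's English description precedes it below -/
import Mathlib

section
/- Let Q be a finite connected non-simple quandle. The following are equivalent: (i) Q is locally strictly simple; (ii) for every congruence α of Q with 0_Q ≠ α ≠ 1_Q, the quotient Q/α and every block [a]_α are strictly simple quandles; (iii) there exists a congruence α of Q with 0_Q ≠ α ≠ 1_Q such that Q/α and every block [a]_α are strictly simple quandles. -/
/-!  Basic theory of quandles: structures, subquandles, congruences,
quotients, displacement groups, affine and principal quandles. -/

universe u v

/-- A quandle structure on a set `Q`: a binary operation whose left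
translations are bijective, which is left self-distributive and idempotent. -/
structure QuandleStruct (Q : Type*) where
  act : Q → Q → Q
  act_bijective : ∀ a, Function.Bijective (act a)
  self_distrib : ∀ a b c, act a (act b c) = act (act a b) (act a c)
  act_idem : ∀ a, act a a = a

namespace QuandleStruct

variable {Q : Type*} {R : Type*}

/-- The left translation `L_a` as a permutation of `Q`. -/
noncomputable def L (S : QuandleStruct Q) (a : Q) : Equiv.Perm Q :=
  Equiv.ofBijective (S.act a) (S.act_bijective a)

@[simp] lemma L_apply (S : QuandleStruct Q) (a b : Q) : S.L a b = S.act a b := rfl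

/-- Left division `a \ b`. -/
noncomputable def ldiv (S : QuandleStruct Q) (a b : Q) : Q := (S.L a).symm b

@[simp] lemma ldiv_act (S : QuandleStruct Q) (a b : Q) : S.ldiv a (S.act a b) = b :=
  (S.L a).symm_apply_apply b

@[simp] lemma act_ldiv (S : QuandleStruct Q) (a b : Q) : S.act a (S.ldiv a b) = b :=
  (S.L a).apply_symm_apply b

/-- The displacement group `Dis(Q)`, generated by all `L_a ∘ L_b⁻¹`. -/
def Dis (S : QuandleStruct Q) : Subgroup (Equiv.Perm Q) :=
  Subgroup.closure {g | ∃ a b, g = S.L a * (S.L b)⁻¹}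

/-- A quandle is connected if its displacement group acts transitively. -/
def Connected (S : QuandleStruct Q) : Prop := ∀ x y : Q, ∃ g ∈ S.Dis, g x = y

/-- A quandle is faithful if `a ↦ L_a` is injective. -/
def Faithful (S : QuandleStruct Q) : Prop := Function.Injective S.L

/-- A quandle is latin if all right translations are bijective. -/
def Latin (S : QuandleStruct Q) : Prop := ∀ a : Q, Function.Bijective (fun b => S.act b a)

/-- A subquandle: a nonempty subset closed under the operation and left division. -/
def IsSubquandle (S : QuandleStruct Q) (s : Set Q) : Prop :=
  s.Nonempty ∧ ∀ a ∈ s, ∀ b ∈ s, S.act a b ∈ s ∧ S.ldiv a b ∈ s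

/-- The quandle structure induced on a subquandle. -/
def restrict (S : QuandleStruct Q) (s : Set Q) (hs : S.IsSubquandle s) :
    QuandleStruct s where
  act a b := ⟨S.act a.1 b.1, (hs.2 a.1 a.2 b.1 b.2).1⟩
  act_bijective a := by
    constructor
    · intro x y h
      exact Subtype.ext ((S.act_bijective a.1).1 (congrArg Subtype.val h))
    · intro b
      refine ⟨⟨S.ldiv a.1 b.1, (hs.2 a.1 a.2 b.1 b.2).2⟩, Subtype.ext ?_⟩
      exact S.act_ldiv a.1 b.1
  self_distrib a b c := Subtype.ext (S.self_distrib a.1 b.1 c.1)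
  act_idem a := Subtype.ext (S.act_idem a.1)

/-- A quandle (with more than one element) is strictly simple if it has no
proper subquandle. -/
def StrictlySimple (S : QuandleStruct Q) : Prop :=
  Nontrivial Q ∧ ∀ s : Set Q, S.IsSubquandle s → s.Nontrivial → s = Set.univ

/-- A quandle is locally strictly simple (LSS) if every proper subquandle is
strictly simple. -/
def LSS (S : QuandleStruct Q) : Prop :=
  ∀ (s : Set Q) (hs : S.IsSubquandle s), s.Nontrivial → s ≠ Set.univ →
    StrictlySimple (S.restrict s hs)

/-- A congruence of a quandle: an equivalence relation compatible with the
operation and with left division. -/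
structure IsCongruence (S : QuandleStruct Q) (r : Q → Q → Prop) : Prop where
  equiv : Equivalence r
  act_comp : ∀ {a b c d}, r a b → r c d → r (S.act a c) (S.act b d)
  ldiv_comp : ∀ {a b c d}, r a b → r c d → r (S.ldiv a c) (S.ldiv b d)

/-- The setoid attached to a congruence. -/
def IsCongruence.setoid {S : QuandleStruct Q} {r : Q → Q → Prop}
    (hr : S.IsCongruence r) : Setoid Q := ⟨r, hr.equiv⟩

/-- The quotient quandle `Q/α`. -/
def quot (S : QuandleStruct Q) {r : Q → Q → Prop} (hr : S.IsCongruence r) :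
    QuandleStruct (Quotient hr.setoid) where
  act := Quotient.map₂ S.act fun _ _ h1 _ _ h2 => hr.act_comp h1 h2
  act_bijective := by
    intro a
    induction a using Quotient.ind with
    | _ a =>
    constructor
    · intro x y
      induction x using Quotient.ind with
      | _ x =>
      induction y using Quotient.ind with
      | _ y =>
      intro h
      have h1 : r (S.act a x) (S.act a y) := Quotient.exact h
      have h2 := hr.ldiv_comp (hr.equiv.refl a) h1
      rw [S.ldiv_act, S.ldiv_act] at h2
      exact Quotient.sound h2
    · intro b
      induction b using Quotient.ind with
      | _ b =>
      exact ⟨Quotient.mk _ (S.ldiv a b), congrArg (Quotient.mk _) (S.act_ldiv a b)⟩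
  self_distrib := by
    intro a b c
    induction a using Quotient.ind with
    | _ a =>
    induction b using Quotient.ind with
    | _ b =>
    induction c using Quotient.ind with
    | _ c =>
    exact congrArg (Quotient.mk _) (S.self_distrib a b c)
  act_idem := by
    intro a
    induction a using Quotient.ind with
    | _ a =>
    exact congrArg (Quotient.mk _) (S.act_idem a)

/-- The congruence block `[a]_α` is a subquandle. -/
lemma block_isSubquandle (S : QuandleStruct Q) {r : Q → Q → Prop}
    (hr : S.IsCongruence r) (a : Q) : S.IsSubquandle {b | r a b} := by
  refine ⟨⟨a, hr.equiv.refl a⟩, fun x hx y hy => ⟨?_, ?_⟩⟩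
  · have h := hr.act_comp hx hy
    rwa [S.act_idem] at h
  · have h := hr.ldiv_comp hx hy
    have ha : S.ldiv a a = a := by
      have h2 := S.ldiv_act a a
      rwa [S.act_idem] at h2
    rwa [ha] at h

/-- A quandle is simple if its only congruences are `0_Q` (equality) and
`1_Q` (the full relation). -/
def Simple (S : QuandleStruct Q) : Prop :=
  ∀ r : Q → Q → Prop, S.IsCongruence r →
    r = (fun a b : Q => a = b) ∨ r = (fun _ _ : Q => True)

/-- A quandle is subdirectly irreducible if the intersection of all congruences
different from `0_Q` is different from `0_Q`. -/
def SubdirectlyIrreducible (S : QuandleStruct Q) : Prop :=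
  ∃ a b : Q, a ≠ b ∧ ∀ r : Q → Q → Prop, S.IsCongruence r →
    r ≠ (fun a b : Q => a = b) → r a b

/-- Isomorphism of quandles. -/
def QIso (S : QuandleStruct Q) (T : QuandleStruct R) : Prop :=
  ∃ e : Q ≃ R, ∀ a b, e (S.act a b) = T.act (e a) (e b)

/-- The relation `σ_Q` : two elements are related iff their point stabilizers
in the displacement group coincide. -/
def sigmaRel (S : QuandleStruct Q) (a b : Q) : Prop :=
  ∀ g ∈ S.Dis, (g a = a ↔ g b = b)

/-- The displacement group relative to a relation `r`. -/
def DisRel (S : QuandleStruct Q) (r : Q → Q → Prop) : Subgroup (Equiv.Perm Q) :=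
  Subgroup.closure {g | ∃ a b, r a b ∧ g = S.L a * (S.L b)⁻¹}

/-- The direct product of two quandles. -/
def prod (S : QuandleStruct Q) (T : QuandleStruct R) : QuandleStruct (Q × R) where
  act a b := (S.act a.1 b.1, T.act a.2 b.2)
  act_bijective a := by
    show Function.Bijective (Prod.map (S.act a.1) (T.act a.2))
    exact (S.act_bijective a.1).prodMap (T.act_bijective a.2)
  self_distrib a b c := Prod.ext (S.self_distrib a.1 b.1 c.1) (T.self_distrib a.2 b.2 c.2)
  act_idem a := Prod.ext (S.act_idem a.1) (T.act_idem a.2)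

end QuandleStruct

/-- The affine quandle `Aff(A, f)` over an abelian group `A` with
`a * b = (1 - f)(a) + f(b)`. -/
def affineQuandle (A : Type*) [AddCommGroup A] (f : A ≃+ A) : QuandleStruct A where
  act a b := a - f a + f b
  act_bijective a := by
    show Function.Bijective ((fun x : A => a - f a + x) ∘ f)
    exact (Equiv.addLeft (a - f a)).bijective.comp f.bijective
  self_distrib a b c := by
    simp only [map_add, map_sub]
    abel
  act_idem a := by simp

/-- Data for an affine quandle: a finite abelian group together with an
automorphism. -/
structure AffineData : Type 1 where
  carrier : Type
  [grp : AddCommGroup carrier]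
  [fin : Finite carrier]
  equivAdd : carrier ≃+ carrier

attribute [instance] AffineData.grp AffineData.fin

namespace QuandleStruct

/-- A quandle is affine if it is isomorphic to `Aff(A, f)` for some finite
abelian group `A` and automorphism `f`. -/
def IsAffine {Q : Type*} (S : QuandleStruct Q) : Prop :=
  ∃ D : AffineData, S.QIso (affineQuandle D.carrier D.equivAdd)

end QuandleStruct

/-- The principal quandle `Q(G, f)` with `a * b = a f(a⁻¹ b)`. -/
def principalQuandle (G : Type*) [Group G] (f : G ≃* G) : QuandleStruct G where
  act a b := a * f (a⁻¹ * b)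
  act_bijective a := by
    show Function.Bijective ((fun x : G => a * x) ∘ (⇑f) ∘ (fun b : G => a⁻¹ * b))
    exact ((Equiv.mulLeft a).bijective.comp f.bijective).comp (Equiv.mulLeft a⁻¹).bijective
  self_distrib a b c := by
    simp only [map_mul, map_inv, mul_inv_rev, inv_inv]
    group
  act_idem a := by simp

/-- An extraspecial `q`-group: a finite `q`-group whose center, derived
subgroup and Frattini subgroup coincide and have order `q`. -/
def IsExtraspecial (q : ℕ) (G : Type*) [Group G] : Prop :=
  Finite G ∧ IsPGroup q G ∧ Subgroup.center G = commutator G ∧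
    commutator G = frattini G ∧ Nat.card (Subgroup.center G) = q

/-- A bundled group. -/
structure GroupData : Type 1 where
  carrier : Type
  [grp : Group carrier]

attribute [instance] GroupData.grp

/-!
In an LSS quandle the blocks of a congruence `α ≠ 0, 1` are proper, and nontrivial since
`Dis(Q)` carries a nontrivial block onto every block; the preimage of a proper subquandle of
`Q/α` is a proper subquandle made of whole blocks, which, being strictly simple, lies in a single
block. Conversely, if `Q/α` and the blocks are strictly simple, a proper subquandle `s` either
lies in a block, and then equals it, or maps onto `Q/α`. In the latter case `s` embeds in `Q/α`
if it meets every block at most once; otherwise it contains a whole block, and the union of the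
blocks contained in `s` is invariant under every `L_u`, hence is all of `Q` by connectedness.
-/

open scoped Pointwise

namespace QuandleStruct

variable {Q R P : Type*} {S : QuandleStruct Q} {T : QuandleStruct R}

def IsHom (S : QuandleStruct Q) (T : QuandleStruct R) (f : Q → R) : Prop :=
  ∀ a b, f (S.act a b) = T.act (f a) (f b)

lemma IsHom.map_ldiv {f : Q → R} (hf : S.IsHom T f) (a b : Q) :
    f (S.ldiv a b) = T.ldiv (f a) (f b) := by
  rw [← T.ldiv_act (f a) (f (S.ldiv a b)), ← hf, S.act_ldiv]

lemma IsHom.comp {U : QuandleStruct P} {f : Q → R} {g : R → P} (hg : T.IsHom U g)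
    (hf : S.IsHom T f) : S.IsHom U (g ∘ f) := fun a b => by
  simp only [Function.comp_apply, hf a b, hg (f a) (f b)]

lemma isHom_val {s : Set Q} (hs : S.IsSubquandle s) :
    (S.restrict s hs).IsHom S Subtype.val := fun _ _ => rfl

lemma isHom_mk {r : Q → Q → Prop} (hr : S.IsCongruence r) :
    S.IsHom (S.quot hr) (Quotient.mk hr.setoid) := fun _ _ => rfl

lemma IsSubquandle.image {f : Q → R} (hf : S.IsHom T f) {s : Set Q} (hs : S.IsSubquandle s) :
    T.IsSubquandle (f '' s) := by
  refine ⟨hs.1.image f, ?_⟩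
  rintro _ ⟨a, ha, rfl⟩ _ ⟨b, hb, rfl⟩
  exact ⟨⟨_, (hs.2 a ha b hb).1, hf a b⟩, ⟨_, (hs.2 a ha b hb).2, hf.map_ldiv a b⟩⟩

lemma IsSubquandle.preimage {f : Q → R} (hf : S.IsHom T f) {t : Set R}
    (ht : T.IsSubquandle t) (hne : (f ⁻¹' t).Nonempty) : S.IsSubquandle (f ⁻¹' t) := by
  refine ⟨hne, fun a ha b hb => ⟨?_, ?_⟩⟩
  · simpa only [Set.mem_preimage, hf a b] using (ht.2 _ ha _ hb).1
  · simpa only [Set.mem_preimage, hf.map_ldiv a b] using (ht.2 _ ha _ hb).2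

lemma StrictlySimple.of_injective [Nontrivial Q] {f : Q → R} (hT : T.StrictlySimple)
    (hf : S.IsHom T f) (hinj : Function.Injective f) : S.StrictlySimple := by
  refine ⟨‹_›, fun t ht htnt => Set.eq_univ_of_forall fun x => ?_⟩
  have himage : f '' t = Set.univ := hT.2 _ (ht.image hf) (htnt.image hinj)
  obtain ⟨y, hy, hyx⟩ := Set.eq_univ_iff_forall.1 himage (f x)
  exact hinj hyx ▸ hy

lemma StrictlySimple.subset_of_nontrivial_inter {s t : Set Q} {hs : S.IsSubquandle s}
    (hss : (S.restrict s hs).StrictlySimple) (ht : S.IsSubquandle t)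
    (hst : (s ∩ t).Nontrivial) : s ⊆ t := by
  obtain ⟨x, ⟨hxs, hxt⟩, y, ⟨hys, hyt⟩, hxy⟩ := hst
  have hpre : (Subtype.val ⁻¹' t : Set s) = Set.univ :=
    hss.2 _ (ht.preimage (isHom_val hs) ⟨⟨x, hxs⟩, hxt⟩)
      ⟨⟨x, hxs⟩, hxt, ⟨y, hys⟩, hyt, fun h => hxy (congrArg Subtype.val h)⟩
  exact fun z hz => Set.eq_univ_iff_forall.1 hpre ⟨z, hz⟩

lemma L_mem_stabilizer {B : Set Q} (hact : ∀ u, ∀ x ∈ B, S.act u x ∈ B)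
    (hldiv : ∀ u, ∀ x ∈ B, S.ldiv u x ∈ B) (u : Q) :
    S.L u ∈ MulAction.stabilizer (Equiv.Perm Q) B := by
  rw [MulAction.mem_stabilizer_iff]
  ext x
  rw [Set.mem_smul_set_iff_inv_smul_mem, show (S.L u)⁻¹ • x = S.ldiv u x from rfl]
  exact ⟨fun hx => S.act_ldiv u x ▸ hact u _ hx, hldiv u x⟩

lemma Connected.eq_univ_of_invariant (hconn : S.Connected) {B : Set Q} (hB : B.Nonempty)
    (hact : ∀ u, ∀ x ∈ B, S.act u x ∈ B) (hldiv : ∀ u, ∀ x ∈ B, S.ldiv u x ∈ B) :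
    B = Set.univ := by
  have hDis : S.Dis ≤ MulAction.stabilizer (Equiv.Perm Q) B := by
    refine Subgroup.closure_le _ |>.2 ?_
    rintro _ ⟨a, b, rfl⟩
    exact mul_mem (L_mem_stabilizer hact hldiv a) (inv_mem (L_mem_stabilizer hact hldiv b))
  obtain ⟨a, ha⟩ := hB
  refine Set.eq_univ_of_forall fun y => ?_
  obtain ⟨g, hg, rfl⟩ := hconn a y
  have hgB : g • B = B := hDis hg
  exact hgB ▸ Set.smul_mem_smul_set ha

namespace IsCongruence

variable {r : Q → Q → Prop} (hr : S.IsCongruence r)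
include hr

lemma block_nontrivial (hconn : S.Connected) (hne0 : r ≠ fun a b : Q => a = b) (a : Q) :
    {b | r a b}.Nontrivial := by
  have hB : {x | ∃ c, r x c ∧ x ≠ c} = Set.univ := by
    refine hconn.eq_univ_of_invariant ?_ ?_ ?_
    · obtain ⟨x, y, hxy, hne⟩ : ∃ x y, r x y ∧ x ≠ y := by
        by_contra! h
        exact hne0 (funext₂ fun x y => propext ⟨h x y, fun hxy => hxy ▸ hr.equiv.refl x⟩)
      exact ⟨x, y, hxy, hne⟩
    · rintro u x ⟨c, hxc, hne⟩
      exact ⟨_, hr.act_comp (hr.equiv.refl u) hxc, fun h => hne ((S.act_bijective u).1 h)⟩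
    · rintro u x ⟨c, hxc, hne⟩
      exact ⟨_, hr.ldiv_comp (hr.equiv.refl u) hxc, fun h => hne ((S.L u).symm.injective h)⟩
  obtain ⟨c, hac, hne⟩ := Set.eq_univ_iff_forall.1 hB a
  exact ⟨a, hr.equiv.refl a, c, hac, hne⟩

lemma block_ne_univ (hne1 : r ≠ fun _ _ : Q => True) (a : Q) : {b | r a b} ≠ Set.univ := by
  intro h
  have hrel := Set.eq_univ_iff_forall.1 h
  exact hne1 (funext₂ fun x y => eq_true (hr.equiv.trans (hr.equiv.symm (hrel x)) (hrel y)))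

lemma nontrivial_quotient (hne1 : r ≠ fun _ _ : Q => True) : Nontrivial (Quotient hr.setoid) := by
  by_contra! h
  exact hne1 (funext₂ fun x y =>
    eq_true (Quotient.exact (Subsingleton.elim (α := Quotient hr.setoid) ⟦x⟧ ⟦y⟧)))

/-- `L_u` acts on blocks as `L_v` does for any `v ∈ s` in the block of `u`, so the union of the
blocks contained in `s` is invariant. -/
lemma eq_univ_of_block_subset (hconn : S.Connected) {s : Set Q} (hs : S.IsSubquandle s)
    (hmeet : ∀ q, ∃ v ∈ s, r v q) {a : Q} (ha : {c | r a c} ⊆ s) : s = Set.univ := by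
  set B := {x | {c | r x c} ⊆ s}
  have hsat : ∀ {x y}, r x y → y ∈ B → x ∈ B := fun hxy hy c hc =>
    hy (hr.equiv.trans (hr.equiv.symm hxy) hc)
  have hB : B = Set.univ := by
    refine hconn.eq_univ_of_invariant ⟨a, ha⟩ (fun u x hx => ?_) (fun u x hx => ?_)
    · obtain ⟨v, hv, hvu⟩ := hmeet u
      refine hsat (hr.act_comp (hr.equiv.symm hvu) (hr.equiv.refl x)) fun c hc => ?_
      have hrel := hr.ldiv_comp (hr.equiv.refl v) hc
      rw [S.ldiv_act] at hrel
      simpa only [S.act_ldiv] using (hs.2 v hv _ (hx hrel)).1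
    · obtain ⟨v, hv, hvu⟩ := hmeet u
      refine hsat (hr.ldiv_comp (hr.equiv.symm hvu) (hr.equiv.refl x)) fun c hc => ?_
      have hrel := hr.act_comp (hr.equiv.refl v) hc
      rw [S.act_ldiv] at hrel
      simpa only [S.ldiv_act] using (hs.2 v hv _ (hx hrel)).2
  exact Set.eq_univ_of_forall fun y => Set.eq_univ_iff_forall.1 hB y (hr.equiv.refl y)

end IsCongruence

variable {r : Q → Q → Prop}

lemma LSS.block_strictlySimple (hL : S.LSS) (hconn : S.Connected) (hr : S.IsCongruence r)
    (hne0 : r ≠ fun a b : Q => a = b) (hne1 : r ≠ fun _ _ : Q => True) (a : Q) :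
    (S.restrict {b | r a b} (S.block_isSubquandle hr a)).StrictlySimple :=
  hL _ _ (hr.block_nontrivial hconn hne0 a) (hr.block_ne_univ hne1 a)

lemma LSS.quot_strictlySimple (hL : S.LSS) (hconn : S.Connected) (hr : S.IsCongruence r)
    (hne0 : r ≠ fun a b : Q => a = b) (hne1 : r ≠ fun _ _ : Q => True) :
    (S.quot hr).StrictlySimple := by
  refine ⟨hr.nontrivial_quotient hne1, fun t ht htnt => ?_⟩
  by_contra htne
  have hsurj : Function.Surjective (Quotient.mk hr.setoid) := Quotient.mk_surjective
  set s := Quotient.mk hr.setoid ⁻¹' t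
  have hs : S.IsSubquandle s := ht.preimage (isHom_mk hr) (ht.1.preimage hsurj)
  have hsne : s ≠ Set.univ := fun h => htne <| Set.eq_univ_of_forall fun q => by
    obtain ⟨y, rfl⟩ := hsurj q
    exact Set.eq_univ_iff_forall.1 h y
  obtain ⟨x, hx⟩ := hs.1
  have hblock : {b | r x b} ⊆ s := fun b hb => by
    change Quotient.mk hr.setoid b ∈ t
    rw [← Quotient.sound (s := hr.setoid) hb]
    exact hx
  have hsx : s ⊆ {b | r x b} :=
    (hL s hs (htnt.preimage hsurj) hsne).subset_of_nontrivial_inter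
      (S.block_isSubquandle hr x)
      (by rw [Set.inter_eq_right.2 hblock]; exact hr.block_nontrivial hconn hne0 x)
  refine htnt.not_subset_singleton (x := Quotient.mk hr.setoid x) fun q hq => ?_
  induction q using Quotient.ind with
  | _ y => exact Quotient.sound (hr.equiv.symm (hsx hq))

lemma LSS_of_strictlySimple_quot_of_strictlySimple_block (hconn : S.Connected)
    (hr : S.IsCongruence r) (hq : (S.quot hr).StrictlySimple)
    (hb : ∀ a, (S.restrict {b | r a b} (S.block_isSubquandle hr a)).StrictlySimple) :
    S.LSS := by
  intro s hs hsnt hsne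
  obtain ⟨a, ha⟩ := hs.1
  by_cases hsa : s ⊆ {b | r a b}
  · obtain rfl : s = {b | r a b} :=
      hsa.antisymm ((hb a).subset_of_nontrivial_inter hs (by rwa [Set.inter_eq_right.2 hsa]))
    exact hb a
  have hsurj : Quotient.mk hr.setoid '' s = Set.univ := by
    obtain ⟨b, hbs, hab⟩ := Set.not_subset.1 hsa
    exact hq.2 _ (hs.image (isHom_mk hr))
      ⟨_, ⟨a, ha, rfl⟩, _, ⟨b, hbs, rfl⟩, fun h => hab (Quotient.exact h)⟩
  by_cases hinj : Set.InjOn (Quotient.mk hr.setoid) s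
  · have := hsnt.coe_sort
    exact hq.of_injective ((isHom_mk hr).comp (isHom_val hs)) hinj.injective
  exfalso
  obtain ⟨b, hbs, c, hcs, hbc, hne⟩ : ∃ b ∈ s, ∃ c ∈ s,
      Quotient.mk hr.setoid b = Quotient.mk hr.setoid c ∧ b ≠ c := by
    simpa [Set.InjOn] using hinj
  refine hsne (hr.eq_univ_of_block_subset hconn hs (fun q => ?_)
    ((hb b).subset_of_nontrivial_inter hs
      ⟨b, ⟨hr.equiv.refl b, hbs⟩, c, ⟨Quotient.exact hbc, hcs⟩, hne⟩))
  obtain ⟨v, hv, hvq⟩ := Set.eq_univ_iff_forall.1 hsurj (Quotient.mk hr.setoid q)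
  exact ⟨v, hv, Quotient.exact hvq⟩

end QuandleStruct

theorem statement8_general {Q : Type u} (S : QuandleStruct Q)
    (hconn : S.Connected) (hns : ¬ S.Simple) :
    (S.LSS ↔
      ∀ (r : Q → Q → Prop) (hr : S.IsCongruence r),
        r ≠ (fun a b : Q => a = b) → r ≠ (fun _ _ : Q => True) →
        (S.quot hr).StrictlySimple ∧
        ∀ a : Q, (S.restrict {b | r a b} (S.block_isSubquandle hr a)).StrictlySimple) ∧
    (S.LSS ↔
      ∃ (r : Q → Q → Prop) (hr : S.IsCongruence r),
        r ≠ (fun a b : Q => a = b) ∧ r ≠ (fun _ _ : Q => True) ∧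
        (S.quot hr).StrictlySimple ∧
        ∀ a : Q, (S.restrict {b | r a b} (S.block_isSubquandle hr a)).StrictlySimple) := by
  obtain ⟨r, hr, hne0, hne1⟩ : ∃ r, S.IsCongruence r ∧
      r ≠ (fun a b : Q => a = b) ∧ r ≠ (fun _ _ : Q => True) := by
    simpa [QuandleStruct.Simple, not_or] using hns
  refine ⟨⟨fun hL r hr hne0 hne1 => ?_, fun h => ?_⟩, ⟨fun hL => ?_, ?_⟩⟩
  · exact ⟨hL.quot_strictlySimple hconn hr hne0 hne1,
      hL.block_strictlySimple hconn hr hne0 hne1⟩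
  · obtain ⟨hq, hb⟩ := h r hr hne0 hne1
    exact QuandleStruct.LSS_of_strictlySimple_quot_of_strictlySimple_block hconn hr hq hb
  · exact ⟨r, hr, hne0, hne1, hL.quot_strictlySimple hconn hr hne0 hne1,
      hL.block_strictlySimple hconn hr hne0 hne1⟩
  · rintro ⟨r, hr, -, -, hq, hb⟩
    exact QuandleStruct.LSS_of_strictlySimple_quot_of_strictlySimple_block hconn hr hq hb

/-- For a finite connected non-simple quandle `Q`, TFAE:
(i) `Q` is LSS; (ii) for every proper congruence both the quotient and all
blocks are strictly simple; (iii) there is a proper congruence whose quotient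
and blocks are strictly simple. -/
theorem statement8 {Q : Type u} [Finite Q] (S : QuandleStruct Q)
    (hconn : S.Connected) (hns : ¬ S.Simple) :
    (S.LSS ↔
      ∀ (r : Q → Q → Prop) (hr : S.IsCongruence r),
        r ≠ (fun a b : Q => a = b) → r ≠ (fun _ _ : Q => True) →
        (S.quot hr).StrictlySimple ∧
        ∀ a : Q, (S.restrict {b | r a b} (S.block_isSubquandle hr a)).StrictlySimple) ∧
    (S.LSS ↔
      ∃ (r : Q → Q → Prop) (hr : S.IsCongruence r),
        r ≠ (fun a b : Q => a = b) ∧ r ≠ (fun _ _ : Q => True) ∧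
        (S.quot hr).StrictlySimple ∧
        ∀ a : Q, (S.restrict {b | r a b} (S.block_isSubquandle hr a)).StrictlySimple) :=
  statement8_general S hconn hns
end

section
/- Let p be a prime and let Q = Aff(A, f) be a finite connected affine quandle that is non-simple, subdirectly irreducible and locally strictly simple, where A is an abelian p-group of exponent p². Then A is isomorphic to (Z_{p²})^n for some n, and the quotient of Q by its unique congruence α with 0_Q ≠ α ≠ 1_Q is isomorphic as a quandle to each block [a]_α. -/
/-!  Basic theory of quandles: structures, subquandles, congruences,
quotients, displacement groups, affine and principal quandles. -/

universe u v

/-!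
Connectedness of `Aff(A, f)` makes `1 - f` surjective, so every translation of `A` is a
composite of left translations and left divisions. Hence congruences are translation
invariant, i.e. they are the coset relations of `f`-invariant subgroups, and these subgroups
are subquandles. By LSS, a nontrivial `f`-invariant subgroup equals every proper
`f`-invariant subgroup containing it. Exponent `p²` makes `pA` nontrivial and contained in the
proper subgroup `A[p]`, so `pA = A[p]` and `A` is homocyclic. The kernel `N` of a proper
congruence meets `A[p]` nontrivially, so `N = A[p] = pA`, and `x ↦ a + p x` induces
`Q/α ≅ a + N = [a]_α`.
-/

theorem AddCommGroup.nonempty_addEquiv_pi_zmod_sq {p : ℕ} (hp : p.Prime) {A : Type*}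
    [AddCommGroup A] [Finite A] (hsq : ∀ a : A, p ^ 2 • a = 0)
    (hdiv : ∀ a : A, p • a = 0 → ∃ b, p • b = a) :
    ∃ n : ℕ, Nonempty (A ≃+ (Fin n → ZMod (p ^ 2))) := by
  classical
  obtain ⟨ι, _, n, hn1, ⟨e⟩⟩ := AddCommGroup.equiv_directSum_zmod_of_finite' A
  let e' : A ≃+ ((i : ι) → ZMod (n i)) :=
    e.trans (DirectSum.linearEquivFunOnFintype ℤ ι _).toAddEquiv
  -- `n i = p` is excluded because the generator of `ZMod p` is killed by `p` but is not in `pA`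
  have hn : ∀ i, n i = p ^ 2 := fun i => by
    have hdvd : n i ∣ p ^ 2 := by
      have h := hsq (e'.symm (Pi.single i 1))
      rw [← map_nsmul, map_eq_zero_iff _ e'.symm.injective] at h
      rw [← ZMod.natCast_eq_zero_iff]
      simpa using congrFun h i
    obtain ⟨k, hk, hki⟩ := (Nat.dvd_prime_pow hp).1 hdvd
    interval_cases k
    · exact absurd (hn1 i) (by simp [hki])
    · have : Fact (1 < n i) := ⟨hn1 i⟩
      have hp0 : (p : ZMod (n i)) = 0 := by simp [ZMod.natCast_eq_zero_iff, hki]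
      obtain ⟨y, hy⟩ := hdiv (e'.symm (Pi.single i 1)) (by
        rw [← map_nsmul, ← Pi.single_smul, nsmul_eq_mul, mul_one, hp0, Pi.single_zero, map_zero])
      simpa [hp0] using congrFun (congrArg e' hy) i
    · exact hki
  exact ⟨Fintype.card ι, ⟨e'.trans <|
    (AddEquiv.piCongrRight fun i => (ZMod.ringEquivCongr (hn i)).toAddEquiv).trans <|
    AddEquiv.arrowCongr (Fintype.equivFin ι) (AddEquiv.refl _)⟩⟩

theorem AddSubgroup.inf_ker_nsmul_ne_bot {A : Type*} [AddCommGroup A] {p : ℕ}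
    (hsq : ∀ a : A, p ^ 2 • a = 0) {N : AddSubgroup A} (hN : N ≠ ⊥) :
    N ⊓ (nsmulAddMonoidHom p).ker ≠ ⊥ := by
  obtain ⟨z, hzN, hz0⟩ := N.bot_or_exists_ne_zero.resolve_left hN
  suffices ∃ y ∈ N, y ≠ 0 ∧ p • y = 0 by
    obtain ⟨y, hyN, hy0, hy⟩ := this
    exact fun h => hy0 (AddSubgroup.mem_bot.1 (h ▸ ⟨hyN, hy⟩))
  by_cases h : p • z = 0
  · exact ⟨z, hzN, hz0, h⟩
  · exact ⟨p • z, N.nsmul_mem hzN p, h, by rw [smul_smul, ← pow_two, hsq]⟩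

namespace AddMonoidHom

variable {A : Type*} [AddCommGroup A] {f : A ≃+ A} {φ : A →+ A}

theorem apply_mem_ker_iff_of_comm (hφ : ∀ x, φ (f x) = f (φ x)) (x : A) :
    f x ∈ φ.ker ↔ x ∈ φ.ker := by
  simp only [mem_ker, hφ, map_eq_zero_iff f f.injective]

theorem apply_mem_range_iff_of_comm (hφ : ∀ x, φ (f x) = f (φ x)) (x : A) :
    f x ∈ φ.range ↔ x ∈ φ.range := by
  refine ⟨fun ⟨y, hy⟩ => ⟨f.symm y, f.injective ?_⟩, fun ⟨y, hy⟩ => ⟨f y, by rw [hφ, hy]⟩⟩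
  rw [← hφ, f.apply_symm_apply, hy]

end AddMonoidHom

namespace QuandleStruct

variable {Q : Type*} {S : QuandleStruct Q}

theorem restrict_ldiv_coe {s : Set Q} (hs : S.IsSubquandle s) (a b : s) :
    ((S.restrict s hs).ldiv a b : Q) = S.ldiv a b :=
  (S.act_bijective a).1 <|
    (congrArg Subtype.val ((S.restrict s hs).act_ldiv a b)).trans (S.act_ldiv a b).symm

theorem LSS.eq_of_subset (hlss : S.LSS) {s u : Set Q} (hs : S.IsSubquandle s)
    (hu : S.IsSubquandle u) (hus : u ⊆ s) (hu_nt : u.Nontrivial) (hs_ne : s ≠ Set.univ) :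
    u = s := by
  let t : Set s := Subtype.val ⁻¹' u
  have ht : (S.restrict s hs).IsSubquandle t := by
    obtain ⟨x, hx⟩ := hu.1
    refine ⟨⟨⟨x, hus hx⟩, hx⟩, fun a ha b hb => ⟨(hu.2 a ha b hb).1, ?_⟩⟩
    change ((S.restrict s hs).ldiv a b : Q) ∈ u
    rw [restrict_ldiv_coe]
    exact (hu.2 a ha b hb).2
  have ht_nt : t.Nontrivial := by
    obtain ⟨x, hx, y, hy, hxy⟩ := hu_nt
    exact ⟨⟨x, hus hx⟩, hx, ⟨y, hus hy⟩, hy, fun h => hxy (congrArg Subtype.val h)⟩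
  have ht_univ := (hlss s hs (hu_nt.mono hus) hs_ne).2 t ht ht_nt
  exact hus.antisymm fun z hz => (ht_univ ▸ Set.mem_univ _ : (⟨z, hz⟩ : s) ∈ t)

end QuandleStruct

namespace affineQuandle

variable {A : Type*} [AddCommGroup A] (f : A ≃+ A)

@[simp] theorem act_eq (a b : A) : (affineQuandle A f).act a b = a - f a + f b := rfl

@[simp] theorem ldiv_eq (a b : A) :
    (affineQuandle A f).ldiv a b = f.symm b - f.symm a + a := by
  apply ((affineQuandle A f).act_bijective a).1
  rw [QuandleStruct.act_ldiv, act_eq, map_add, map_sub, f.apply_symm_apply, f.apply_symm_apply]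
  abel

theorem isSubquandle_addSubgroup (N : AddSubgroup A) (hN : ∀ x, f x ∈ N ↔ x ∈ N) :
    (affineQuandle A f).IsSubquandle N := by
  have hN' : ∀ x, f.symm x ∈ N ↔ x ∈ N := fun x => by
    rw [← hN, f.apply_symm_apply]
  refine ⟨⟨0, N.zero_mem⟩, fun a ha b hb => ⟨?_, ?_⟩⟩
  · simp only [act_eq, SetLike.mem_coe] at ha hb ⊢
    exact add_mem (sub_mem ha ((hN a).2 ha)) ((hN b).2 hb)
  · simp only [ldiv_eq, SetLike.mem_coe] at ha hb ⊢
    exact add_mem (sub_mem ((hN' b).2 hb) ((hN' a).2 ha)) ha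

def subTranslations : Subgroup (Equiv.Perm A) where
  carrier := {g | ∃ x, ∀ z, g z = z + (x - f x)}
  mul_mem' := by
    rintro g h ⟨x, hg⟩ ⟨y, hh⟩
    refine ⟨x + y, fun z => ?_⟩
    rw [Equiv.Perm.mul_apply, hg, hh, map_add]
    abel
  one_mem' := ⟨0, fun z => by simp⟩
  inv_mem' := by
    rintro g ⟨x, hg⟩
    refine ⟨-x, fun z => g.injective ?_⟩
    rw [← Equiv.Perm.mul_apply, mul_inv_cancel, Equiv.Perm.one_apply, hg, map_neg]
    abel

theorem dis_le_subTranslations : (affineQuandle A f).Dis ≤ subTranslations f := by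
  refine (Subgroup.closure_le _).2 ?_
  rintro g ⟨a, b, rfl⟩
  refine ⟨a - b, fun z => ?_⟩
  change (affineQuandle A f).act a ((affineQuandle A f).ldiv b z) = _
  rw [ldiv_eq, act_eq, map_add, map_sub, map_sub, f.apply_symm_apply, f.apply_symm_apply]
  abel

theorem surjective_sub_of_connected (hconn : (affineQuandle A f).Connected) :
    Function.Surjective fun x => x - f x := fun y => by
  obtain ⟨g, hg, hg0⟩ := hconn 0 y
  obtain ⟨x, hx⟩ := dis_le_subTranslations f hg
  exact ⟨x, by rw [← hg0, hx, zero_add]⟩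

variable {f} {r : A → A → Prop}

theorem IsCongruence.add_right (hsurj : Function.Surjective fun x => x - f x)
    (hr : (affineQuandle A f).IsCongruence r) {x y : A} (hxy : r x y) (c : A) :
    r (x + c) (y + c) := by
  obtain ⟨d, hd⟩ := hsurj (f c)
  -- `z ↦ 0 \ (d * z)` is the translation by `c`
  have htrans : ∀ z, (affineQuandle A f).ldiv 0 ((affineQuandle A f).act d z) = z + c := by
    intro z
    simp only [ldiv_eq, act_eq, hd, map_zero, sub_zero, add_zero, ← map_add,
      f.symm_apply_apply]
    abel
  simpa only [htrans] using
    hr.ldiv_comp (hr.equiv.refl 0) (hr.act_comp (hr.equiv.refl d) hxy)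

theorem exists_addSubgroup_of_isCongruence (hsurj : Function.Surjective fun x => x - f x)
    (hr : (affineQuandle A f).IsCongruence r) :
    ∃ N : AddSubgroup A, (∀ x, f x ∈ N ↔ x ∈ N) ∧ ∀ x y, r x y ↔ x - y ∈ N := by
  have hadd := fun {x y} (h : r x y) c => IsCongruence.add_right hsurj hr h c
  let N : AddSubgroup A :=
    { carrier := {z | r z 0}
      zero_mem' := hr.equiv.refl 0
      add_mem' := fun {x y} hx hy => hr.equiv.trans (by simpa using hadd hx y) hy
      neg_mem' := fun {x} hx => hr.equiv.symm (by simpa using hadd hx (-x)) }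
  have hrN : ∀ x y, r x y ↔ x - y ∈ N := fun x y =>
    ⟨fun h => by simpa [N, sub_eq_add_neg] using hadd h (-y),
     fun h => by simpa using hadd h y⟩
  refine ⟨N, fun x => ⟨fun h => ?_, fun h => ?_⟩, hrN⟩
  · change r x 0
    simpa using hr.ldiv_comp (hr.equiv.refl 0) h
  · change r (f x) 0
    simpa using hr.act_comp (hr.equiv.refl 0) h

theorem quot_qIso_block (hr : (affineQuandle A f).IsCongruence r)
    {N : AddSubgroup A} (hrN : ∀ x y, r x y ↔ x - y ∈ N) {φ : A →+ A}
    (hφ : ∀ x, φ (f x) = f (φ x)) (hker : φ.ker = N) (hrange : φ.range = N) (a : A) :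
    ((affineQuandle A f).quot hr).QIso ((affineQuandle A f).restrict {b | r a b}
      ((affineQuandle A f).block_isSubquandle hr a)) := by
  have hmem : ∀ x, a + φ x ∈ {b | r a b} := fun x =>
    (hrN _ _).2 (by rw [← hrange, sub_add_cancel_left]; exact neg_mem ⟨x, rfl⟩)
  have hφr : ∀ x y, φ x = φ y ↔ r x y := fun x y => by
    rw [hrN, ← hker, AddMonoidHom.mem_ker, map_sub, sub_eq_zero]
  let e : Quotient hr.setoid → {b | r a b} := Quotient.lift (fun x => ⟨a + φ x, hmem x⟩)
    fun x y h => Subtype.ext (congrArg (a + ·) ((hφr x y).2 h))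
  have he : Function.Bijective e := by
    constructor
    · rintro ⟨x⟩ ⟨y⟩ h
      exact Quotient.sound ((hφr x y).1 (add_left_cancel (congrArg Subtype.val h)))
    · rintro ⟨b, hb⟩
      obtain ⟨x, hx⟩ : b - a ∈ φ.range := hrange ▸ (hrN b a).1 (hr.equiv.symm hb)
      exact ⟨⟦x⟧, Subtype.ext (show a + φ x = b by rw [hx]; abel)⟩
  refine ⟨Equiv.ofBijective e he, ?_⟩
  rintro ⟨x⟩ ⟨y⟩
  apply Subtype.ext
  change a + φ (x - f x + f y) = (a + φ x) - f (a + φ x) + f (a + φ y)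
  simp only [map_add, map_sub, hφ]
  abel

theorem LSS.eq_of_le (hlss : (affineQuandle A f).LSS) {M N : AddSubgroup A}
    (hM : ∀ x, f x ∈ M ↔ x ∈ M) (hN : ∀ x, f x ∈ N ↔ x ∈ N) (hMN : M ≤ N) (hM_bot : M ≠ ⊥)
    (hN_top : N ≠ ⊤) : M = N :=
  SetLike.coe_injective <| hlss.eq_of_subset (isSubquandle_addSubgroup f N hN)
    (isSubquandle_addSubgroup f M hM) hMN
    (Set.nontrivial_coe_sort.1 ((AddSubgroup.nontrivial_iff_ne_bot M).2 hM_bot))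
    (by simpa using hN_top)

variable {p : ℕ}

theorem LSS.range_nsmul_eq_ker (hlss : (affineQuandle A f).LSS) (hsq : ∀ a : A, p ^ 2 • a = 0)
    {a : A} (ha : p • a ≠ 0) :
    (nsmulAddMonoidHom p : A →+ A).range = (nsmulAddMonoidHom p).ker := by
  have hφ : ∀ x, nsmulAddMonoidHom p (f x) = f (nsmulAddMonoidHom p x) :=
    fun x => (map_nsmul f p x).symm
  refine LSS.eq_of_le hlss (AddMonoidHom.apply_mem_range_iff_of_comm hφ)
    (AddMonoidHom.apply_mem_ker_iff_of_comm hφ) ?_ ?_ ?_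
  · rintro _ ⟨b, rfl⟩
    simp [smul_smul, ← pow_two, hsq]
  · exact fun h => ha (AddSubgroup.mem_bot.1 (h ▸ ⟨a, rfl⟩))
  · exact fun h => ha (h.symm ▸ AddSubgroup.mem_top a :)

theorem LSS.eq_ker_nsmul (hlss : (affineQuandle A f).LSS) (hsq : ∀ a : A, p ^ 2 • a = 0)
    {a : A} (ha : p • a ≠ 0) {N : AddSubgroup A} (hN : ∀ x, f x ∈ N ↔ x ∈ N)
    (hN_bot : N ≠ ⊥) (hN_top : N ≠ ⊤) : N = (nsmulAddMonoidHom p).ker := by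
  have hker := AddMonoidHom.apply_mem_ker_iff_of_comm (φ := nsmulAddMonoidHom p)
    fun x => (map_nsmul f p x).symm
  have hinf : N ⊓ (nsmulAddMonoidHom p).ker = N :=
    LSS.eq_of_le hlss (fun x => and_congr (hN x) (hker x)) hN inf_le_left
      (N.inf_ker_nsmul_ne_bot hsq hN_bot) hN_top
  exact LSS.eq_of_le hlss hN hker (inf_eq_left.1 hinf) hN_bot
    fun h => ha (h.symm ▸ AddSubgroup.mem_top a :)

end affineQuandle

theorem statement12_general {p : ℕ} (hp : p.Prime) {A : Type u} [AddCommGroup A]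
    [Finite A] (f : A ≃+ A)
    (hexp : AddMonoid.exponent A = p ^ 2)
    (hconn : (affineQuandle A f).Connected)
    (hlss : (affineQuandle A f).LSS) :
    (∃ n : ℕ, Nonempty (A ≃+ (Fin n → ZMod (p ^ 2)))) ∧
    ∀ (r : A → A → Prop) (hr : (affineQuandle A f).IsCongruence r),
      r ≠ (fun a b : A => a = b) → r ≠ (fun _ _ : A => True) →
      ∀ a : A, ((affineQuandle A f).quot hr).QIso
        ((affineQuandle A f).restrict {b | r a b}
          ((affineQuandle A f).block_isSubquandle hr a)) := by
  have hsq : ∀ a : A, p ^ 2 • a = 0 := hexp ▸ AddMonoid.exponent_nsmul_eq_zero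
  obtain ⟨a₀, ha₀⟩ : ∃ a : A, p • a ≠ 0 := by
    by_contra! h
    have := Nat.le_of_dvd hp.pos (hexp ▸ AddMonoid.exponent_dvd_of_forall_nsmul_eq_zero h)
    nlinarith [hp.two_le]
  have hrange := affineQuandle.LSS.range_nsmul_eq_ker hlss hsq ha₀
  refine ⟨AddCommGroup.nonempty_addEquiv_pi_zmod_sq hp hsq fun a ha => ?_,
    fun r hr hr_bot hr_top a => ?_⟩
  · exact (hrange.symm ▸ ha : a ∈ (nsmulAddMonoidHom p).range)
  obtain ⟨N, hNf, hrN⟩ := affineQuandle.exists_addSubgroup_of_isCongruence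
    (affineQuandle.surjective_sub_of_connected f hconn) hr
  have hN := affineQuandle.LSS.eq_ker_nsmul hlss hsq ha₀ hNf
    (fun h => hr_bot (funext₂ fun x y => by simp [hrN, h, sub_eq_zero]))
    (fun h => hr_top (funext₂ fun x y => by simp [hrN, h]))
  exact affineQuandle.quot_qIso_block hr hrN (fun x => (map_nsmul f p x).symm) hN.symm
    (hrange.trans hN.symm) a

/-- Let `Q = Aff(A, f)` be a finite connected affine quandle
which is non-simple, subdirectly irreducible and LSS, where `A` is an abelian
`p`-group of exponent `p²`. Then `A ≅ (Z_{p²})^n` and the quotient by the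
unique proper congruence is isomorphic to each block. -/
theorem statement12 {p : ℕ} (hp : p.Prime) {A : Type u} [AddCommGroup A]
    [Finite A] (f : A ≃+ A) (hpgrp : IsPGroup p (Multiplicative A))
    (hexp : AddMonoid.exponent A = p ^ 2)
    (hconn : (affineQuandle A f).Connected)
    (hns : ¬ (affineQuandle A f).Simple)
    (hsi : (affineQuandle A f).SubdirectlyIrreducible)
    (hlss : (affineQuandle A f).LSS) :
    (∃ n : ℕ, Nonempty (A ≃+ (Fin n → ZMod (p ^ 2)))) ∧
    ∀ (r : A → A → Prop) (hr : (affineQuandle A f).IsCongruence r),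
      r ≠ (fun a b : A => a = b) → r ≠ (fun _ _ : A => True) →
      ∀ a : A, ((affineQuandle A f).quot hr).QIso
        ((affineQuandle A f).restrict {b | r a b}
          ((affineQuandle A f).block_isSubquandle hr a)) :=
  statement12_general hp f hexp hconn hlss
end
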